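/- Let A ∈ ℝ^{n×n} and B ∈ ℝ^{n×p}, and assume the pair (A,B) is not controllable, i.e., r := dim ℛ(A,B) < n, where ℛ(A,B) = span{ A^i b_j : i ≥ 0, 1 ≤ j ≤ p }. Then there exists an invertible matrix T ∈ ℝ^{n×n} such that Ã := T^{−1} A T and B̃ := T^{−1} B have the block structure Ã = [[A1, A2],[0, A3]] and B̃ = [[B1],[0]] with A1 ∈ ℝ^{r×r} and B1 ∈ ℝ^{r×p}, and moreover the pair (A1, B1) is controllable. -/

import Mathlib

open Matrix

/-- The controllable space `ℛ(A,B) = span{ A^i b_j : i ≥ 0, 1 ≤ j ≤ p }`. -/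
def controllableSpace {n p : ℕ} (A : Matrix (Fin n) (Fin n) ℝ)
    (B : Matrix (Fin n) (Fin p) ℝ) : Submodule ℝ (Fin n → ℝ) :=
  Submodule.span ℝ {v | ∃ (i : ℕ) (j : Fin p), v = (A ^ i).mulVec fun k => B k j}

/-- Cayley–Hamilton: the `r`-th power of an `r × r` matrix is a combination of lower powers. -/
lemma pow_dim_eq (r : ℕ) (M : Matrix (Fin r) (Fin r) ℝ) :
    M ^ r = ∑ m ∈ Finset.range r, (-(M.charpoly.coeff m)) • M ^ m := by
  have h := M.aeval_self_charpoly
  rw [Polynomial.aeval_eq_sum_range, Matrix.charpoly_natDegree_eq_dim, Fintype.card_fin,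
    Finset.sum_range_succ] at h
  have hm : M.charpoly.coeff r = 1 := by
    have h1 := M.charpoly_monic
    have hd := M.charpoly_natDegree_eq_dim
    rw [Fintype.card_fin] at hd
    have h2 := h1.coeff_natDegree
    rwa [hd] at h2
  rw [hm, one_smul] at h
  have h2 : M ^ r = -∑ i ∈ Finset.range r, M.charpoly.coeff i • M ^ i :=
    eq_neg_of_add_eq_zero_right h
  rw [h2, ← Finset.sum_neg_distrib]
  exact Finset.sum_congr rfl fun m _ => (neg_smul _ _).symm

/-- The controllable space is spanned by the first `r` powers. -/
lemma krylov_trunc (r p : ℕ) (A1 : Matrix (Fin r) (Fin r) ℝ) (B1 : Matrix (Fin r) (Fin p) ℝ) :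
    controllableSpace A1 B1 =
      Submodule.span ℝ
        {v | ∃ (i : Fin r) (j : Fin p), v = (A1 ^ (i : ℕ)).mulVec fun k => B1 k j} := by
  apply le_antisymm
  · rw [controllableSpace, Submodule.span_le]
    rintro x ⟨i, j, rfl⟩
    induction i using Nat.strong_induction_on with
    | _ i ih =>
      by_cases hi : i < r
      · exact Submodule.subset_span ⟨⟨i, hi⟩, j, rfl⟩
      · push_neg at hi
        rcases Nat.eq_zero_or_pos r with h0 | h0
        · have hz : ((A1 ^ i).mulVec fun k => B1 k j) = 0 := by
            subst h0; exact funext fun k => k.elim0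
          rw [hz]; exact Submodule.zero_mem _
        · have hieq : i - r + r = i := Nat.sub_add_cancel hi
          have hpow : A1 ^ i
              = ∑ m ∈ Finset.range r, (-(A1.charpoly.coeff m)) • A1 ^ (i - r + m) := by
            calc A1 ^ i = A1 ^ (i - r) * A1 ^ r := by rw [← pow_add, hieq]
            _ = ∑ m ∈ Finset.range r, (-(A1.charpoly.coeff m)) • (A1 ^ (i - r) * A1 ^ m) := by
                rw [pow_dim_eq, Finset.mul_sum]
                exact Finset.sum_congr rfl fun m _ => Matrix.mul_smul _ _ _
            _ = _ := Finset.sum_congr rfl fun m _ => by rw [← pow_add]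
          rw [hpow]
          have hlin : ((∑ m ∈ Finset.range r, (-(A1.charpoly.coeff m)) • A1 ^ (i - r + m)).mulVec
              fun k => B1 k j)
              = ∑ m ∈ Finset.range r,
                (-(A1.charpoly.coeff m)) • ((A1 ^ (i - r + m)).mulVec fun k => B1 k j) := by
            ext a
            simp only [Matrix.mulVec, dotProduct, Finset.sum_apply, Matrix.sum_apply,
              Matrix.smul_apply, Pi.smul_apply, smul_eq_mul, Finset.sum_mul]
            rw [Finset.sum_comm]
            exact Finset.sum_congr rfl fun m _ => by
              rw [Finset.mul_sum]
              exact Finset.sum_congr rfl fun k _ => by ring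
          rw [hlin]
          exact Submodule.sum_mem _ fun m hm => Submodule.smul_mem _ _
            (ih _ (by have := Finset.mem_range.mp hm; omega))
  · rw [controllableSpace, Submodule.span_le]
    rintro x ⟨i, j, rfl⟩
    exact Submodule.subset_span ⟨(i : ℕ), j, rfl⟩

theorem statement_6 (n p : ℕ) (A : Matrix (Fin n) (Fin n) ℝ)
    (B : Matrix (Fin n) (Fin p) ℝ) (r : ℕ)
    (hr : r = Module.finrank ℝ (controllableSpace A B)) (hrn : r < n) :
    ∃ T : Matrix (Fin n) (Fin n) ℝ, IsUnit T.det ∧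
      ∃ (A1 : Matrix (Fin r) (Fin r) ℝ) (B1 : Matrix (Fin r) (Fin p) ℝ),
        (∀ (i j : Fin n), r ≤ (i : ℕ) → (j : ℕ) < r → (T⁻¹ * A * T) i j = 0) ∧
        (∀ (i : Fin n) (j : Fin p), r ≤ (i : ℕ) → (T⁻¹ * B) i j = 0) ∧
        (∀ (i j : Fin r),
          A1 i j = (T⁻¹ * A * T) (Fin.castLE hrn.le i) (Fin.castLE hrn.le j)) ∧
        (∀ (i : Fin r) (j : Fin p), B1 i j = (T⁻¹ * B) (Fin.castLE hrn.le i) j) ∧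
        (Matrix.of fun (i : Fin r) (jk : Fin r × Fin p) =>
          (A1 ^ (jk.1 : ℕ) * B1) i jk.2).rank = r := by
  classical
  set W := controllableSpace A B with hWdef
  have hgen : ∀ (i : ℕ) (j : Fin p), (fun k => (A ^ i * B) k j) ∈ W := fun i j =>
    Submodule.subset_span ⟨i, j, by
      ext k; simp [Matrix.mulVec, Matrix.mul_apply, dotProduct]⟩
  have hrW : Module.finrank ℝ W = r := hr.symm
  obtain ⟨W', hcompl⟩ := Submodule.exists_isCompl W
  have hrW' : Module.finrank ℝ W' = n - r := by
    have h := Submodule.finrank_add_eq_of_isCompl hcompl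
    rw [hrW, Module.finrank_fin_fun] at h
    omega
  let bW : Module.Basis (Fin r) ℝ W := Module.finBasisOfFinrankEq ℝ W hrW
  let bW' : Module.Basis (Fin (n - r)) ℝ W' := Module.finBasisOfFinrankEq ℝ W' hrW'
  have hm : r + (n - r) = n := by omega
  let e : Fin r ⊕ Fin (n - r) ≃ Fin n := finSumFinEquiv.trans (finCongr hm)
  have heinl : ∀ a : Fin r, ((e (Sum.inl a) : Fin n) : ℕ) = (a : ℕ) := by
    intro a; simp [e, finSumFinEquiv_apply_left]
  have heinr : ∀ b : Fin (n - r), ((e (Sum.inr b) : Fin n) : ℕ) = r + (b : ℕ) := by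
    intro b; simp [e, finSumFinEquiv_apply_right]
  let v : Module.Basis (Fin n) ℝ (Fin n → ℝ) :=
    ((bW.prod bW').map (Submodule.prodEquivOfIsCompl W W' hcompl)).reindex e
  -- key vanishing of high coordinates on W
  have hvan : ∀ x, x ∈ W → ∀ i : Fin n, r ≤ (i : ℕ) → v.repr x i = 0 := by
    intro x hx i hi
    rw [Module.Basis.repr_reindex_apply]
    rcases hsi : e.symm i with a | b
    · exfalso
      have hie : i = e (Sum.inl a) := by rw [← hsi, Equiv.apply_symm_apply]
      have : (i : ℕ) = (a : ℕ) := by rw [hie, heinl]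
      omega
    · have hsymm : (Submodule.prodEquivOfIsCompl W W' hcompl).symm x = (⟨x, hx⟩, 0) :=
        Submodule.prodEquivOfIsCompl_symm_apply_left (p := W) (q := W') hcompl ⟨x, hx⟩
      simp [Module.Basis.map_repr, hsymm]
  -- basis vectors with low index lie in W
  have hvW : ∀ j : Fin n, (j : ℕ) < r → v j ∈ W := by
    intro j hj
    have hsj : e.symm j = Sum.inl ⟨j, hj⟩ := by
      rw [Equiv.symm_apply_eq]
      exact Fin.ext (by rw [heinl])
    have : v j = (Submodule.prodEquivOfIsCompl W W' hcompl) ((bW.prod bW') (Sum.inl ⟨j, hj⟩)) := by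
      rw [Module.Basis.reindex_apply, hsj, Module.Basis.map_apply]
    rw [this, Module.Basis.prod_apply, Submodule.coe_prodEquivOfIsCompl']
    simp
  -- A-invariance of W
  have hAW : ∀ x, x ∈ W → A.mulVec x ∈ W := by
    intro x hx
    refine Submodule.span_induction (p := fun x _ => A.mulVec x ∈ W) ?_ ?_ ?_ ?_ hx
    · rintro y ⟨i, j, rfl⟩
      refine Submodule.subset_span ⟨i + 1, j, ?_⟩
      rw [Matrix.mulVec_mulVec, ← pow_succ']
    · simp [Matrix.mulVec_zero]
    · intro y z _ _ hy hz
      rw [Matrix.mulVec_add]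
      exact Submodule.add_mem W hy hz
    · intro c y _ hy
      rw [Matrix.mulVec_smul]
      exact Submodule.smul_mem W c hy
  -- the change-of-basis matrix
  let T : Matrix (Fin n) (Fin n) ℝ := (Pi.basisFun ℝ (Fin n)).toMatrix v
  haveI : Invertible T := (Pi.basisFun ℝ (Fin n)).invertibleToMatrix v
  have hTdet : IsUnit T.det := (Matrix.isUnit_iff_isUnit_det T).mp (isUnit_of_invertible T)
  have hTcol : ∀ i j, T i j = v j i := by
    intro i j
    simp [T, Module.Basis.toMatrix_apply, Pi.basisFun_repr]
  have hTinv : ∀ x : Fin n → ℝ, T⁻¹.mulVec x = fun i => v.repr x i := by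
    intro x
    have h1 : (T.mulVec fun j => v.repr x j) = x := by
      ext i
      calc (T.mulVec fun j => v.repr x j) i = ∑ j, v.repr x j * v j i := by
            simp [Matrix.mulVec, dotProduct, hTcol, mul_comm]
      _ = (∑ j, v.repr x j • v j) i := by simp [Finset.sum_apply]
      _ = x i := by rw [v.sum_repr]
    calc T⁻¹.mulVec x = T⁻¹.mulVec (T.mulVec fun j => v.repr x j) := by rw [h1]
    _ = (T⁻¹ * T).mulVec fun j => v.repr x j := by rw [Matrix.mulVec_mulVec]
    _ = fun i => v.repr x i := by rw [Matrix.nonsing_inv_mul T hTdet, Matrix.one_mulVec]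
  have hmulcol : ∀ {q : ℕ} (M : Matrix (Fin n) (Fin q) ℝ) (i : Fin n) (j : Fin q),
      (T⁻¹ * M) i j = T⁻¹.mulVec (fun k => M k j) i := by
    intro q M i j
    simp [Matrix.mul_apply, Matrix.mulVec, dotProduct]
  have hentry : ∀ (x : Fin n → ℝ) (i : Fin n), T⁻¹.mulVec x i = v.repr x i := by
    intro x i; rw [hTinv]
  -- bottom rows of T⁻¹ * A^i * B vanish
  have hbot : ∀ (i : ℕ) (k : Fin n) (j : Fin p), r ≤ (k : ℕ) →
      (T⁻¹ * (A ^ i * B)) k j = 0 := by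
    intro i k j hk
    rw [hmulcol, hentry]
    exact hvan _ (hgen i j) k hk
  -- bottom-left block of à vanishes
  have hAzero : ∀ (i j : Fin n), r ≤ (i : ℕ) → (j : ℕ) < r → (T⁻¹ * A * T) i j = 0 := by
    intro i j hi hj
    rw [Matrix.mul_assoc, hmulcol]
    have hcol : (fun k => (A * T) k j) = A.mulVec (v j) := by
      ext k
      simp [Matrix.mul_apply, Matrix.mulVec, dotProduct, hTcol]
    rw [hcol, hentry]
    exact hvan _ (hAW _ (hvW j hj)) i hi
  have hBzero : ∀ (i : Fin n) (j : Fin p), r ≤ (i : ℕ) → (T⁻¹ * B) i j = 0 := by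
    intro i j hi
    have := hbot 0 i j hi
    rwa [pow_zero, Matrix.one_mul] at this
  -- blocks
  let A1 : Matrix (Fin r) (Fin r) ℝ :=
    Matrix.of fun a b => (T⁻¹ * A * T) (Fin.castLE hrn.le a) (Fin.castLE hrn.le b)
  let B1 : Matrix (Fin r) (Fin p) ℝ :=
    Matrix.of fun a j => (T⁻¹ * B) (Fin.castLE hrn.le a) j
  -- sum splitting
  have hsum : ∀ f : Fin n → ℝ, (∀ k : Fin n, r ≤ (k : ℕ) → f k = 0) →
      ∑ k, f k = ∑ b : Fin r, f (Fin.castLE hrn.le b) := by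
    intro f hf
    calc ∑ k, f k = ∑ s : Fin r ⊕ Fin (n - r), f (e s) :=
          (Fintype.sum_equiv e (fun s => f (e s)) f fun s => rfl).symm
    _ = (∑ a : Fin r, f (e (Sum.inl a))) + ∑ b : Fin (n - r), f (e (Sum.inr b)) :=
          Fintype.sum_sum_type _
    _ = ∑ a : Fin r, f (Fin.castLE hrn.le a) := by
          have h1 : ∀ b : Fin (n - r), f (e (Sum.inr b)) = 0 := fun b =>
            hf _ (by rw [heinr b]; omega)
          have h2 : ∀ a : Fin r, e (Sum.inl a) = Fin.castLE hrn.le a := fun a =>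
            Fin.ext (heinl a)
          rw [Finset.sum_eq_zero fun b _ => h1 b, add_zero]
          exact Finset.sum_congr rfl fun a _ => by rw [h2 a]
  -- the top block of T⁻¹ A^i B is A1^i B1
  have hblock : ∀ (i : ℕ) (a : Fin r) (j : Fin p),
      (T⁻¹ * (A ^ i * B)) (Fin.castLE hrn.le a) j = (A1 ^ i * B1) a j := by
    intro i
    induction i with
    | zero => intro a j; simp [A1, B1]
    | succ i ihi =>
      intro a j
      have hstep : (T⁻¹ * A * T) * (T⁻¹ * (A ^ i * B)) = T⁻¹ * (A ^ (i + 1) * B) := by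
        calc (T⁻¹ * A * T) * (T⁻¹ * (A ^ i * B)) = T⁻¹ * A * (T * (T⁻¹ * (A ^ i * B))) := by
              rw [Matrix.mul_assoc]
        _ = T⁻¹ * A * (A ^ i * B) := by
              rw [← Matrix.mul_assoc T, Matrix.mul_nonsing_inv T hTdet, Matrix.one_mul]
        _ = T⁻¹ * (A ^ (i + 1) * B) := by
              rw [Matrix.mul_assoc, ← Matrix.mul_assoc A, ← pow_succ']
      rw [← hstep, Matrix.mul_apply]
      rw [hsum _ (fun k hk => by rw [hbot i k j hk, mul_zero])]
      have : ∀ b : Fin r, (T⁻¹ * A * T) (Fin.castLE hrn.le a) (Fin.castLE hrn.le b)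
          * (T⁻¹ * (A ^ i * B)) (Fin.castLE hrn.le b) j = A1 a b * (A1 ^ i * B1) b j := by
        intro b; rw [ihi b j]; rfl
      rw [Finset.sum_congr rfl fun b _ => this b]
      rw [pow_succ', Matrix.mul_assoc, Matrix.mul_apply]
  -- the projection onto the first r coordinates
  let φ : (Fin n → ℝ) →ₗ[ℝ] (Fin r → ℝ) :=
    (LinearMap.funLeft ℝ ℝ (Fin.castLE hrn.le)).comp v.equivFun.toLinearMap
  have hφ : ∀ (x : Fin n → ℝ) (a : Fin r), φ x a = v.repr x (Fin.castLE hrn.le a) := by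
    intro x a
    simp [φ, LinearMap.funLeft_apply, Module.Basis.equivFun_apply]
  have hgenmap : ∀ (i : ℕ) (j : Fin p),
      φ ((A ^ i).mulVec fun k => B k j) = (A1 ^ i).mulVec fun k => B1 k j := by
    intro i j
    ext a
    rw [hφ]
    have h1 : ((A ^ i).mulVec fun k => B k j) = fun k => (A ^ i * B) k j := by
      ext k; simp [Matrix.mulVec, Matrix.mul_apply, dotProduct]
    rw [h1, ← hentry, ← hmulcol, hblock i a j]
    simp [Matrix.mulVec, Matrix.mul_apply, dotProduct]
  have hmap : Submodule.map φ W = controllableSpace A1 B1 := by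
    rw [hWdef, controllableSpace, controllableSpace, Submodule.map_span]
    congr 1
    ext x
    constructor
    · rintro ⟨y, ⟨i, j, rfl⟩, rfl⟩
      exact ⟨i, j, hgenmap i j⟩
    · rintro ⟨i, j, rfl⟩
      exact ⟨(A ^ i).mulVec fun k => B k j, ⟨i, j, rfl⟩, hgenmap i j⟩
  -- injectivity of φ on W
  have hinj : ∀ x, x ∈ W → φ x = 0 → x = 0 := by
    intro x hx h0
    have hall : ∀ i : Fin n, v.repr x i = 0 := by
      intro i
      by_cases hi : (i : ℕ) < r
      · have h := congrFun h0 ⟨(i : ℕ), hi⟩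
        rw [hφ] at h
        have : Fin.castLE hrn.le ⟨(i : ℕ), hi⟩ = i := Fin.ext rfl
        rwa [this] at h
      · exact hvan x hx i (le_of_not_gt hi)
    have : v.repr x = 0 := Finsupp.ext hall
    exact (LinearEquiv.map_eq_zero_iff v.repr).mp this
  have hinjres : Function.Injective (φ.domRestrict W) := by
    rw [injective_iff_map_eq_zero]
    intro z hz
    have : (z : Fin n → ℝ) = 0 := hinj z z.2 hz
    exact Subtype.ext this
  have hfr : Module.finrank ℝ (Submodule.map φ W) = r := by
    rw [← LinearMap.range_domRestrict]
    rw [← (LinearEquiv.ofInjective _ hinjres).finrank_eq]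
    exact hrW
  refine ⟨T, hTdet, A1, B1, hAzero, hBzero, fun i j => rfl, fun i j => rfl, ?_⟩
  have hC : (Matrix.of fun (i : Fin r) (jk : Fin r × Fin p) =>
      (A1 ^ (jk.1 : ℕ) * B1) i jk.2).rank = Module.finrank ℝ (controllableSpace A1 B1) := by
    have hset : Set.range (Matrix.of fun (i : Fin r) (jk : Fin r × Fin p) =>
        (A1 ^ (jk.1 : ℕ) * B1) i jk.2)ᵀ
        = {w | ∃ (i : Fin r) (j : Fin p), w = (A1 ^ (i : ℕ)).mulVec fun k => B1 k j} := by
      ext x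
      simp only [Set.mem_range, Set.mem_setOf_eq]
      constructor
      · rintro ⟨jk, rfl⟩
        exact ⟨jk.1, jk.2, by
          ext a
          simp [Matrix.transpose_apply, Matrix.mulVec, Matrix.mul_apply, dotProduct]⟩
      · rintro ⟨i, j, rfl⟩
        exact ⟨(i, j), by
          ext a
          simp [Matrix.transpose_apply, Matrix.mulVec, Matrix.mul_apply, dotProduct]⟩
    rw [Matrix.rank, Matrix.range_mulVecLin]
    erw [hset]
    rw [krylov_trunc]
  rw [hC, ← hmap, hfr]
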